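/- Fix σ² > 0 and a nonnegative integer t. Starting from φ(0, σ²) = 1/2 and applying the recursion φ(μ + σ², σ²) = e^{-μ-σ²/2}(1 - φ(μ, σ²)) repeatedly, the value φ(tσ², σ²) is determined exactly; in particular φ(σ², σ²) = e^{-σ²/2}/2 and φ(2σ², σ²) = e^{-3σ²/2}(1 - e^{-σ²/2}/2). -/

import Mathlib

open MeasureTheory ProbabilityTheory Real

/-- The logistic-normal integral `φ(μ, σ²) = E[1/(1+e^W)]` for `W ~ N(μ, σ²)`. -/
noncomputable def logisticNormal (m : ℝ) (s2 : NNReal) : ℝ :=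
  ∫ w, (1 + Real.exp w)⁻¹ ∂(gaussianReal m s2)

/-- The sequence of exact values obtained from Pirjol's recursion starting at
`φ(0, σ²) = 1/2`. -/
noncomputable def pirjolSeq (s2 : ℝ) : ℕ → ℝ
  | 0 => 1 / 2
  | t + 1 => Real.exp (-(t * s2) - s2 / 2) * (1 - pirjolSeq s2 t)

/-!
Writing `φ(m, v) = ∫ σ(-w) dN(m, v)` with the sigmoid `σ`, the symmetry `σ(-w) = 1 - σ(w)` of
the logistic function and the reflection `w ↦ -w` of `N(0, v)` give `φ(0, v) = 1/2`. Shifting the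
mean by `v` multiplies the Gaussian density by `e^{w - m - v/2}`, and `e^w σ(-w) = σ(w) = 1 - σ(-w)`,
which yields the recursion `φ(m + v, v) = e^{-m-v/2} (1 - φ(m, v))`; induction on `t` then
evaluates `φ(t v, v)`.
-/

lemma gaussianPDFReal_add_var (m : ℝ) (v : NNReal) (x : ℝ) :
    gaussianPDFReal (m + v) v x = exp (x - m - v / 2) * gaussianPDFReal m v x := by
  rcases eq_or_ne v 0 with rfl | hv
  · simp [gaussianPDFReal_zero_var]
  have hv' : (v : ℝ) ≠ 0 := mod_cast hv
  rw [gaussianPDFReal, gaussianPDFReal, mul_left_comm, ← exp_add]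
  congr 2
  field_simp
  ring

/-- Shifting the mean of a Gaussian by its variance is the exponential tilt by `e^x`
(the normalising constant `e^{m + v/2}` is the moment generating function at `1`). -/
lemma integral_gaussianReal_add_var {E : Type*} [NormedAddCommGroup E] [NormedSpace ℝ E]
    [CompleteSpace E] (m : ℝ) (v : NNReal) (g : ℝ → E) :
    ∫ x, g x ∂gaussianReal (m + v) v = exp (-m - v / 2) • ∫ x, exp x • g x ∂gaussianReal m v := by
  rcases eq_or_ne v 0 with rfl | hv
  · simp only [gaussianReal_zero_var, integral_dirac, smul_smul, ← exp_add]
    simp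
  rw [integral_gaussianReal_eq_integral_smul hv, integral_gaussianReal_eq_integral_smul hv,
    ← integral_smul]
  congr 1 with x
  rw [gaussianPDFReal_add_var, smul_smul, smul_smul]
  congr 1
  rw [show x - m - v / 2 = (-m - v / 2) + x by ring, exp_add]
  ring

lemma logisticNormal_eq_integral_sigmoid (m : ℝ) (v : NNReal) :
    logisticNormal m v = ∫ w, sigmoid (-w) ∂gaussianReal m v := by
  simp [logisticNormal, sigmoid_def]

lemma integrable_sigmoid_neg (μ : Measure ℝ) [IsFiniteMeasure μ] :
    Integrable (fun w ↦ sigmoid (-w)) μ :=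
  .of_bound (by fun_prop) 1 (.of_forall fun w ↦ by
    rw [norm_of_nonneg (sigmoid_nonneg _)]; exact sigmoid_le_one _)

lemma integral_one_sub_sigmoid_neg (m : ℝ) (v : NNReal) :
    ∫ w, (1 - sigmoid (-w)) ∂gaussianReal m v = 1 - logisticNormal m v := by
  rw [integral_sub (integrable_const 1) (integrable_sigmoid_neg _),
    logisticNormal_eq_integral_sigmoid]
  simp

lemma logisticNormal_neg (m : ℝ) (v : NNReal) :
    logisticNormal (-m) v = 1 - logisticNormal m v := by
  rw [logisticNormal_eq_integral_sigmoid, ← gaussianReal_map_neg,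
    integral_map (by fun_prop) (by fun_prop), ← integral_one_sub_sigmoid_neg]
  simp [sigmoid_neg]

lemma logisticNormal_zero (v : NNReal) : logisticNormal 0 v = 1 / 2 := by
  have h := logisticNormal_neg 0 v
  rw [neg_zero] at h
  linarith

lemma logisticNormal_add_var (m : ℝ) (v : NNReal) :
    logisticNormal (m + v) v = exp (-m - v / 2) * (1 - logisticNormal m v) := by
  rw [logisticNormal_eq_integral_sigmoid, integral_gaussianReal_add_var,
    ← integral_one_sub_sigmoid_neg, smul_eq_mul]
  congr 2 with w
  rw [smul_eq_mul, ← sigmoid_neg, mul_comm]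
  simpa using sigmoid_mul_rexp_neg (-w)

lemma logisticNormal_natCast_mul (v : NNReal) (t : ℕ) :
    logisticNormal (t * v) v = pirjolSeq v t := by
  induction t with
  | zero => simpa [pirjolSeq] using logisticNormal_zero v
  | succ t ih => rw [Nat.cast_succ, add_one_mul, logisticNormal_add_var, ih, pirjolSeq]

theorem logisticNormal_grid_general (s2 : NNReal) :
    (∀ t : ℕ, logisticNormal (t * (s2 : ℝ)) s2 = pirjolSeq (s2 : ℝ) t) ∧
      logisticNormal (s2 : ℝ) s2 = Real.exp (-(s2 : ℝ) / 2) / 2 ∧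
      logisticNormal (2 * (s2 : ℝ)) s2 =
        Real.exp (-(3 * (s2 : ℝ)) / 2) * (1 - Real.exp (-(s2 : ℝ) / 2) / 2) := by
  refine ⟨logisticNormal_natCast_mul s2, ?_, ?_⟩
  · rw [← one_mul (s2 : ℝ), ← Nat.cast_one, logisticNormal_natCast_mul]
    simp only [pirjolSeq]
    push_cast
    ring_nf
  · rw [← Nat.cast_two, logisticNormal_natCast_mul]
    simp only [pirjolSeq]
    push_cast
    ring_nf

/-- Starting from `φ(0, σ²) = 1/2`, the recursion
`φ(μ + σ², σ²) = e^{-μ-σ²/2}(1 - φ(μ, σ²))` determines `φ(tσ², σ²)` exactly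
for every nonnegative integer `t`; in particular `φ(σ², σ²) = e^{-σ²/2}/2`
and `φ(2σ², σ²) = e^{-3σ²/2}(1 - e^{-σ²/2}/2)`. -/
theorem logisticNormal_grid (s2 : NNReal) (hs2 : 0 < s2) :
    (∀ t : ℕ, logisticNormal (t * (s2 : ℝ)) s2 = pirjolSeq (s2 : ℝ) t) ∧
      logisticNormal (s2 : ℝ) s2 = Real.exp (-(s2 : ℝ) / 2) / 2 ∧
      logisticNormal (2 * (s2 : ℝ)) s2 =
        Real.exp (-(3 * (s2 : ℝ)) / 2) * (1 - Real.exp (-(s2 : ℝ) / 2) / 2) :=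
  logisticNormal_grid_general s2
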